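/- arXiv:1210.1942 — 2 statements merged into one kernel-verified Lean document; each statement's English description precedes it below -/
import Mathlib

section
/- For 0 < α < 1, ∫_0^1 du/√((1-u²)(1-αu²)) = (π/2) Σ_{n≥0} C(2n,n)² (α/16)^n, where C(2n,n) is the central binomial coefficient. -/
/-!
Substituting `u = sin θ` turns the integral into `∫₀^{π/2} (1 - α sin² θ)^{-1/2} dθ`. Expanding
`(1 - x)^{-1/2} = Σ C(2n,n) (x/4)^n` and integrating termwise with Wallis' formula
`∫₀^{π/2} sin^{2n} θ dθ = (π/2) C(2n,n) / 4^n` produces the series.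

The binomial expansion of `(1 - x)^{-1/2}` is itself obtained by the same termwise integration,
applied to the geometric series `(1 - x sin² θ)⁻¹ = Σ (x sin² θ)^n`: the left side integrates to
`π / (2 √(1 - x))` through the antiderivative `arctan (√(1 - x) tan θ) / √(1 - x)`, the right side
to `(π/2) Σ C(2n,n) x^n / 4^n`.
-/

open Real Set Filter Topology MeasureTheory intervalIntegral

theorem centralBinom_div_four_pow_succ (n : ℕ) :
    (Nat.centralBinom (n + 1) : ℝ) / 4 ^ (n + 1)
      = (2 * n + 1) / (2 * n + 2) * ((Nat.centralBinom n : ℝ) / 4 ^ n) := by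
  have h : ((n : ℝ) + 1) * Nat.centralBinom (n + 1) = 2 * (2 * n + 1) * Nat.centralBinom n := by
    exact_mod_cast Nat.succ_mul_centralBinom_succ n
  rw [pow_succ]
  field_simp
  linear_combination 2 * h

theorem centralBinom_div_four_pow_le_one (n : ℕ) : (Nat.centralBinom n : ℝ) / 4 ^ n ≤ 1 := by
  rw [div_le_one (by positivity)]
  exact_mod_cast Nat.centralBinom_le_four_pow n

theorem integral_sin_pow_even_zero_pi_div_two (n : ℕ) :
    ∫ θ in (0 : ℝ)..π / 2, sin θ ^ (2 * n) = π / 2 * (Nat.centralBinom n / 4 ^ n) := by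
  induction n with
  | zero => simp
  | succ n ih =>
    rw [Nat.mul_succ, integral_sin_pow, ih, sin_zero, cos_pi_div_two,
      centralBinom_div_four_pow_succ]
    push_cast
    ring

theorem one_sub_mul_sin_sq_pos {t : ℝ} (ht : t < 1) (θ : ℝ) : 0 < 1 - t * sin θ ^ 2 := by
  rcases le_or_gt t 0 with h | h <;> nlinarith [sin_sq_le_one θ, sq_nonneg (sin θ)]

theorem hasDerivAt_arctan_mul_tan_div {c x : ℝ} (hc : c ≠ 0) (hx : cos x ≠ 0) :
    HasDerivAt (fun y => arctan (c * tan y) / c) (1 - (1 - c ^ 2) * sin x ^ 2)⁻¹ x := by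
  refine (((hasDerivAt_tan hx).const_mul c).arctan.div_const c).congr_deriv ?_
  rw [tan_eq_sin_div_cos]
  have hs := sin_sq_add_cos_sq x
  have hne : 1 - (1 - c ^ 2) * sin x ^ 2 ≠ 0 := by
    have : 0 < cos x ^ 2 := by positivity
    nlinarith [sq_nonneg (c * sin x)]
  field_simp
  rw [eq_div_iff (by convert hne using 1; ring)]
  linear_combination -hs

theorem integral_inv_one_sub_mul_sin_sq {t : ℝ} (ht : t < 1) :
    ∫ θ in (0 : ℝ)..π / 2, (1 - t * sin θ ^ 2)⁻¹ = π / 2 / √(1 - t) := by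
  obtain ⟨c, hc, rfl⟩ : ∃ c > 0, t = 1 - c ^ 2 :=
    ⟨√(1 - t), sqrt_pos.2 (by linarith), by rw [sq_sqrt (by linarith)]; ring⟩
  have hF0 : Tendsto (fun y => arctan (c * tan y) / c) (𝓝[>] 0) (𝓝 0) := by
    have : ContinuousAt (fun y => arctan (c * tan y) / c) 0 :=
      ((continuous_arctan.continuousAt.comp
        ((continuousAt_tan.2 (by simp)).const_mul c))).div_const c
    simpa using this.tendsto.mono_left nhdsWithin_le_nhds
  have hF1 : Tendsto (fun y => arctan (c * tan y) / c) (𝓝[<] (π / 2)) (𝓝 (π / 2 / c)) :=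
    ((tendsto_arctan_atTop.mono_right nhdsWithin_le_nhds).comp
      (tendsto_tan_pi_div_two.const_mul_atTop hc)).div_const c
  have hcont : Continuous fun θ => (1 - (1 - c ^ 2) * sin θ ^ 2)⁻¹ :=
    (by fun_prop : Continuous fun θ => 1 - (1 - c ^ 2) * sin θ ^ 2).inv₀
      fun θ => (one_sub_mul_sin_sq_pos ht θ).ne'
  rw [integral_eq_sub_of_hasDerivAt_of_tendsto (by positivity)
    (fun x hx => hasDerivAt_arctan_mul_tan_div hc.ne' (cos_pos_of_mem_Ioo
      ⟨by linarith [hx.1, pi_pos], hx.2⟩).ne') (hcont.intervalIntegrable _ _) hF0 hF1,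
    sub_sub_cancel, sqrt_sq hc.le, sub_zero]

theorem abs_mul_sin_sq_le (t θ : ℝ) : |t * sin θ ^ 2| ≤ |t| := by
  rw [abs_mul, abs_of_nonneg (sq_nonneg (sin θ))]
  exact mul_le_of_le_one_right (abs_nonneg t) (sin_sq_le_one θ)

theorem hasSum_integral_mul_sin_sq_pow {a : ℕ → ℝ} {t : ℝ}
    (hs : Summable fun n => |a n| * |t| ^ n) :
    HasSum (fun n => π / 2 * (a n * t ^ n * (Nat.centralBinom n / 4 ^ n)))
      (∫ θ in (0 : ℝ)..π / 2, ∑' n, a n * (t * sin θ ^ 2) ^ n) := by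
  have hbound (n : ℕ) (θ : ℝ) : ‖a n * (t * sin θ ^ 2) ^ n‖ ≤ |a n| * |t| ^ n := by
    rw [norm_mul, norm_pow, Real.norm_eq_abs, Real.norm_eq_abs]
    exact mul_le_mul_of_nonneg_left (pow_le_pow_left₀ (abs_nonneg _) (abs_mul_sin_sq_le t θ) n)
      (abs_nonneg _)
  have hterm (n : ℕ) : ∫ θ in (0 : ℝ)..π / 2, a n * (t * sin θ ^ 2) ^ n
      = π / 2 * (a n * t ^ n * (Nat.centralBinom n / 4 ^ n)) := by
    simp_rw [mul_pow, ← pow_mul, ← mul_assoc]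
    rw [intervalIntegral.integral_const_mul, integral_sin_pow_even_zero_pi_div_two]
    ring
  simpa only [hterm] using intervalIntegral.hasSum_integral_of_dominated_convergence
    (μ := volume) (a := 0) (b := π / 2)
    (fun n _ => |a n| * |t| ^ n) (fun n => (by fun_prop : Continuous _).aestronglyMeasurable)
    (fun n => ae_of_all _ fun θ _ => hbound n θ) (ae_of_all _ fun _ _ => hs)
    intervalIntegrable_const (ae_of_all _ fun θ _ => (hs.of_norm_bounded (hbound · θ)).hasSum)

theorem hasSum_centralBinom_div_four_pow_mul_pow {t : ℝ} (ht : |t| < 1) :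
    HasSum (fun n => (Nat.centralBinom n : ℝ) / 4 ^ n * t ^ n) (√(1 - t))⁻¹ := by
  have h := hasSum_integral_mul_sin_sq_pow (a := fun _ => 1) (t := t)
    (by simpa using summable_geometric_of_lt_one (abs_nonneg t) ht)
  have hgeom (θ : ℝ) : ∑' n : ℕ, (t * sin θ ^ 2) ^ n = (1 - t * sin θ ^ 2)⁻¹ :=
    tsum_geometric_of_abs_lt_one ((abs_mul_sin_sq_le t θ).trans_lt ht)
  simp_rw [one_mul, hgeom, integral_inv_one_sub_mul_sin_sq (abs_lt.1 ht).2,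
    div_eq_mul_inv (π / 2) √(1 - t)] at h
  rw [← hasSum_mul_left_iff (by positivity : π / 2 ≠ 0)]
  simpa only [mul_comm (t ^ _)] using h

theorem image_sin_Ioo_zero_pi_div_two : sin '' Ioo 0 (π / 2) = Ioo 0 1 := by
  ext u
  constructor
  · rintro ⟨θ, hθ, rfl⟩
    refine ⟨sin_pos_of_pos_of_lt_pi hθ.1 (by linarith [hθ.2, pi_pos]), ?_⟩
    simpa using sin_lt_sin_of_lt_of_le_pi_div_two (by linarith [hθ.1, pi_pos]) le_rfl hθ.2
  · intro hu
    exact ⟨arcsin u, ⟨arcsin_pos.2 hu.1, arcsin_lt_pi_div_two.2 hu.2⟩,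
      sin_arcsin (by linarith [hu.1]) hu.2.le⟩

theorem integral_div_sqrt_one_sub_sq_eq_integral_sin (g : ℝ → ℝ) :
    ∫ u in (0 : ℝ)..1, g u / √(1 - u ^ 2) = ∫ θ in (0 : ℝ)..π / 2, g (sin θ) := by
  rw [integral_of_le zero_le_one, integral_of_le pi_div_two_pos.le,
    integral_Ioc_eq_integral_Ioo, integral_Ioc_eq_integral_Ioo, ← image_sin_Ioo_zero_pi_div_two,
    integral_image_eq_integral_abs_deriv_smul measurableSet_Ioo
      (fun θ _ => (hasDerivAt_sin θ).hasDerivWithinAt)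
      (injOn_sin.mono (Ioo_subset_Icc_self.trans
        (Icc_subset_Icc (by linarith [pi_pos]) le_rfl)))]
  refine setIntegral_congr_fun measurableSet_Ioo fun θ hθ => ?_
  have hcos : 0 < cos θ := cos_pos_of_mem_Ioo ⟨by linarith [hθ.1, pi_pos], hθ.2⟩
  rw [← cos_sq', sqrt_sq hcos.le, abs_of_pos hcos, smul_eq_mul, mul_div_cancel₀ _ hcos.ne']

/-- **Elliptic integral representation of the hypergeometric series.** For `0 < α < 1`,
`∫_0^1 du/√((1-u²)(1-αu²)) = (π/2) Σ_{n≥0} C(2n,n)² (α/16)^n`. -/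
theorem elliptic_integral_hypergeometric (α : ℝ) (hα0 : 0 < α) (hα1 : α < 1) :
    ∫ u in (0 : ℝ)..1, 1 / Real.sqrt ((1 - u ^ 2) * (1 - α * u ^ 2))
      = π / 2 * ∑' n : ℕ, ((Nat.centralBinom n : ℝ)) ^ 2 * (α / 16) ^ n := by
  have hα : |α| < 1 := abs_lt.2 ⟨by linarith, hα1⟩
  set c : ℕ → ℝ := fun n => (Nat.centralBinom n : ℝ) / 4 ^ n
  have hsummable : Summable fun n => |c n| * |α| ^ n :=
    (summable_geometric_of_lt_one (abs_nonneg α) hα).of_nonneg_of_le (fun n => by positivity)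
      fun n => mul_le_of_le_one_left (by positivity)
        ((abs_of_nonneg (by positivity)).trans_le (centralBinom_div_four_pow_le_one n))
  have hexpand (θ : ℝ) : (√(1 - α * sin θ ^ 2))⁻¹ = ∑' n, c n * (α * sin θ ^ 2) ^ n :=
    (hasSum_centralBinom_div_four_pow_mul_pow ((abs_mul_sin_sq_le α θ).trans_lt hα)).tsum_eq.symm
  calc ∫ u in (0 : ℝ)..1, 1 / √((1 - u ^ 2) * (1 - α * u ^ 2))
      = ∫ u in (0 : ℝ)..1, (√(1 - α * u ^ 2))⁻¹ / √(1 - u ^ 2) := by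
        refine integral_congr fun u hu => ?_
        rw [uIcc_of_le zero_le_one] at hu
        rw [sqrt_mul (by nlinarith [hu.1, hu.2]), one_div, mul_inv, div_eq_inv_mul]
    _ = ∫ θ in (0 : ℝ)..π / 2, ∑' n, c n * (α * sin θ ^ 2) ^ n := by
        simp_rw [integral_div_sqrt_one_sub_sq_eq_integral_sin, hexpand]
    _ = ∑' n, π / 2 * (c n * α ^ n * c n) :=
        (hasSum_integral_mul_sin_sq_pow hsummable).tsum_eq.symm
    _ = π / 2 * ∑' n : ℕ, ((Nat.centralBinom n : ℝ)) ^ 2 * (α / 16) ^ n := by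
        rw [tsum_mul_left]
        congr 1
        refine tsum_congr fun n => ?_
        rw [div_pow, show (16 : ℝ) ^ n = (4 ^ n) ^ 2 by rw [← pow_mul, mul_comm, pow_mul]; norm_num]
        ring
end

section
/- Let F(α) = ₂F₁(1/2,1/2;1;α) and define u(α) = F(1-α)/(2F(α)) for 0 < α < 1. Then du/dα = -1/(2πα(1-α)F(α)²). -/
/-!
Write `F(x) = ∑ aₙ xⁿ` with `aₙ = (C(2n,n)/4ⁿ)²`. The recurrence `(n+1)² aₙ₊₁ = (n+½)² aₙ` is the
hypergeometric equation in the self-adjoint form `(x(1-x)F')' = F/4`, which `F(1-x)` solves as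
well; hence the Wronskian `W(x) = x(1-x)(F'(x)F(1-x) + F'(1-x)F(x))` is constant on `(0,1)`
(Legendre's relation). Its value is read off as `x → 1⁻`: Wallis' product gives `n aₙ → 1/π`, so by
Abel's theorem `(1-x)F'(x) → 1/π` and `(1-x)F(x) → 0`, whence `W = 1/π`. The quotient rule gives
`u' = -W / (2x(1-x)F(x)²)`.
-/

open scoped Real

/-- The hypergeometric function `F(α) = ₂F₁(1/2,1/2;1;α) = Σ C(2n,n)² (α/16)^n`. -/
noncomputable def F (α : ℝ) : ℝ :=
  ∑' n : ℕ, ((Nat.centralBinom n : ℝ)) ^ 2 * (α / 16) ^ n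

open Filter Topology Set

noncomputable section

section PowerSum

variable {c : ℕ → ℝ} {C x : ℝ}

def powerSum (c : ℕ → ℝ) (x : ℝ) : ℝ := ∑' n, c n * x ^ n

def derivCoeff (c : ℕ → ℝ) (n : ℕ) : ℝ := (n + 1) * c (n + 1)

lemma exists_abs_le_of_tendsto {L : ℝ} (hc : Tendsto c atTop (𝓝 L)) : ∃ C, ∀ n, |c n| ≤ C := by
  obtain ⟨C, hC⟩ := isBounded_iff_forall_norm_le.1 (Metric.isBounded_range_of_tendsto c hc)
  exact ⟨C, fun n => hC _ (mem_range_self n)⟩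

lemma summable_mul_pow_of_abs_le_linear (hc : ∀ n, |c n| ≤ C * (n + 1)) (hx : |x| < 1) :
    Summable fun n => c n * x ^ n := by
  have hx' : ‖|x|‖ < 1 := by rwa [Real.norm_eq_abs, abs_abs]
  refine .of_norm_bounded (((summable_pow_mul_geometric_of_norm_lt_one 1 hx').add
    (summable_geometric_of_lt_one (abs_nonneg x) hx)).mul_left C) fun n => ?_
  rw [Real.norm_eq_abs, abs_mul, abs_pow]
  calc |c n| * |x| ^ n ≤ C * (n + 1) * |x| ^ n := by gcongr; exact hc n
    _ = _ := by ring

lemma summable_mul_pow_of_abs_le (hc : ∀ n, |c n| ≤ C) (hx : |x| < 1) :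
    Summable fun n => c n * x ^ n := by
  have hC : 0 ≤ C := (abs_nonneg _).trans (hc 0)
  refine summable_mul_pow_of_abs_le_linear (C := C) (fun n => (hc n).trans ?_) hx
  exact le_mul_of_one_le_right hC (by linarith [n.cast_nonneg (α := ℝ)])

lemma powerSum_zero (c : ℕ → ℝ) : powerSum c 0 = c 0 := by
  rw [powerSum, tsum_eq_single 0 fun n hn => by simp [hn]]
  simp

lemma powerSum_eq_add_mul_powerSum_succ (h : Summable fun n => c n * x ^ n) :
    powerSum c x = c 0 + x * powerSum (fun n => c (n + 1)) x := by
  rw [powerSum, h.tsum_eq_zero_add, powerSum, ← tsum_mul_left]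
  simp only [pow_zero, mul_one, pow_succ]
  congr 1
  exact tsum_congr fun n => by ring

lemma powerSum_natCast_mul (h : Summable fun n => n * c n * x ^ n) :
    powerSum (fun n => n * c n) x = x * powerSum (derivCoeff c) x := by
  rw [powerSum_eq_add_mul_powerSum_succ h]
  simp only [Nat.cast_zero, zero_mul, zero_add, Nat.cast_succ]
  rfl

lemma hasDerivAt_powerSum (hc : ∀ n, |c n| ≤ C) (hx : |x| < 1) :
    HasDerivAt (powerSum c) (powerSum (derivCoeff c) x) x := by
  obtain ⟨r, hxr, hr1⟩ := exists_between hx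
  have hC : 0 ≤ C := (abs_nonneg _).trans (hc 0)
  have hu : Summable fun n : ℕ => C * (n + 1) * r ^ n :=
    summable_mul_pow_of_abs_le_linear (C := C) (fun n => (abs_of_nonneg (by positivity)).le)
      (by rwa [abs_of_nonneg ((abs_nonneg x).trans hxr.le)])
  have htail : HasDerivAt (fun y => ∑' n, c (n + 1) * y ^ (n + 1))
      (powerSum (derivCoeff c) x) x := by
    refine hasDerivAt_tsum_of_isPreconnected (g' := fun n y => derivCoeff c n * y ^ n) hu
      Metric.isOpen_ball (convex_ball (0 : ℝ) r).isPreconnected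
      (fun n y _ => ((hasDerivAt_pow (n + 1) y).const_mul (c (n + 1))).congr_deriv ?_)
      (fun n y hy => ?_) (Metric.mem_ball_self ((abs_nonneg x).trans_lt hxr)) (by simp)
      (by rwa [mem_ball_zero_iff, Real.norm_eq_abs])
    · simp only [derivCoeff]; push_cast; ring
    · rw [mem_ball_zero_iff, Real.norm_eq_abs] at hy
      rw [Real.norm_eq_abs, derivCoeff, abs_mul, abs_mul, abs_pow]
      rw [abs_of_nonneg (by positivity : (0 : ℝ) ≤ n + 1)]
      calc (n + 1) * |c (n + 1)| * |y| ^ n ≤ (n + 1) * C * r ^ n := by gcongr; exact hc _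
        _ = C * (n + 1) * r ^ n := by ring
  refine (htail.const_add (c 0)).congr_of_eventuallyEq ?_
  filter_upwards [(continuous_abs.tendsto x).eventually (eventually_lt_nhds hx)] with y hy
  rw [powerSum, (summable_mul_pow_of_abs_le hc hy).tsum_eq_zero_add]
  simp

/-- Abel's theorem applied to the differences `c (n + 1) - c n`. -/
lemma tendsto_one_sub_mul_powerSum {L : ℝ} (hc : Tendsto c atTop (𝓝 L)) :
    Tendsto (fun x => (1 - x) * powerSum c x) (𝓝[<] 1) (𝓝 L) := by
  obtain ⟨C, hC⟩ := exists_abs_le_of_tendsto hc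
  have hdiff : Tendsto (powerSum fun n => c (n + 1) - c n) (𝓝[<] 1) (𝓝 (L - c 0)) :=
    Real.tendsto_tsum_powerSeries_nhdsWithin_lt <| by
      simpa only [Finset.sum_range_sub] using hc.sub_const (c 0)
  have hlim : Tendsto (fun x => c 0 + x * powerSum (fun n => c (n + 1) - c n) x) (𝓝[<] 1)
      (𝓝 L) := by
    have := (tendsto_const_nhds (x := c 0)).add
      ((tendsto_id.mono_left nhdsWithin_le_nhds).mul hdiff)
    rwa [one_mul, add_sub_cancel] at this
  refine hlim.congr' ?_
  filter_upwards [Ioo_mem_nhdsLT (show (-1 : ℝ) < 1 by norm_num)] with x hx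
  have hx' : |x| < 1 := abs_lt.2 hx
  have hsum := summable_mul_pow_of_abs_le hC hx'
  have hsum_succ := summable_mul_pow_of_abs_le (fun n => hC (n + 1)) hx'
  have hdiff_eq : powerSum (fun n => c (n + 1) - c n) x
      = powerSum (fun n => c (n + 1)) x - powerSum c x := by
    simp only [powerSum, sub_mul]
    exact hsum_succ.tsum_sub hsum
  rw [hdiff_eq, powerSum_eq_add_mul_powerSum_succ hsum]
  ring

end PowerSum

def coeffF (n : ℕ) : ℝ := ((Nat.centralBinom n : ℝ) / 4 ^ n) ^ 2

lemma F_eq_powerSum : F = powerSum coeffF := by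
  funext x
  refine tsum_congr fun n => ?_
  rw [coeffF, div_pow, div_pow, ← pow_mul, mul_comm n 2, pow_mul]
  norm_num
  ring

lemma coeffF_zero : coeffF 0 = 1 := by simp [coeffF]

lemma abs_coeffF_le_one (n : ℕ) : |coeffF n| ≤ 1 := by
  rw [abs_of_nonneg (sq_nonneg _)]
  refine pow_le_one₀ (by positivity) ((div_le_one (by positivity)).2 ?_)
  exact_mod_cast Nat.centralBinom_le_four_pow n

lemma coeffF_succ (n : ℕ) : ((n : ℝ) + 1) ^ 2 * coeffF (n + 1) = (n + 1 / 2) ^ 2 * coeffF n := by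
  have h : ((n : ℝ) + 1) * Nat.centralBinom (n + 1) = 2 * (2 * n + 1) * Nat.centralBinom n := by
    exact_mod_cast Nat.succ_mul_centralBinom_succ n
  simp only [coeffF, div_pow, pow_succ]
  field_simp
  linear_combination
    4 * ((n + 1) * Nat.centralBinom (n + 1) + 2 * (2 * n + 1) * Nat.centralBinom n : ℝ) * h

lemma mul_coeffF_mul_wallis (n : ℕ) : (2 * n + 1) * coeffF n * Real.Wallis.W n = 1 := by
  have h : (Nat.centralBinom n : ℝ) * (n.factorial * n.factorial) = (2 * n).factorial := by
    rw [Nat.centralBinom_eq_two_mul_choose, two_mul]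
    exact_mod_cast (mul_assoc _ _ _).symm.trans (Nat.add_choose_mul_factorial_mul_factorial n n)
  rw [Real.Wallis.W_eq_factorial_ratio, coeffF, ← h]
  have : (0 : ℝ) < Nat.centralBinom n := by exact_mod_cast Nat.centralBinom_pos n
  field_simp
  rw [← pow_mul, pow_mul, mul_comm, pow_mul]
  norm_num

lemma tendsto_two_mul_add_one_mul_coeffF :
    Tendsto (fun n : ℕ => (2 * n + 1) * coeffF n) atTop (𝓝 (2 / π)) := by
  have h := Real.Wallis.tendsto_W_nhds_pi_div_two.inv₀ (by positivity)
  rw [inv_div] at h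
  refine h.congr fun n => ?_
  exact (eq_inv_of_mul_eq_one_left (mul_coeffF_mul_wallis n)).symm

lemma tendsto_coeffF : Tendsto coeffF atTop (𝓝 0) := by
  have hinv : Tendsto (fun n : ℕ => (2 * n + 1 : ℝ)⁻¹) atTop (𝓝 0) :=
    ((tendsto_natCast_atTop_atTop.const_mul_atTop two_pos).atTop_add
      tendsto_const_nhds).inv_tendsto_atTop
  have h := tendsto_two_mul_add_one_mul_coeffF.mul hinv
  rw [mul_zero] at h
  refine h.congr fun n => ?_
  field_simp

lemma tendsto_natCast_mul_coeffF : Tendsto (fun n : ℕ => n * coeffF n) atTop (𝓝 π⁻¹) := by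
  have h := ((tendsto_natCast_div_add_atTop (1 / 2 : ℝ)).mul
    tendsto_two_mul_add_one_mul_coeffF).div_const 2
  rw [one_mul, div_div, div_mul_cancel_right₀ two_ne_zero, one_div] at h
  refine h.congr fun n => ?_
  field_simp

def derivF : ℝ → ℝ := powerSum (derivCoeff coeffF)

lemma tendsto_derivCoeff_coeffF : Tendsto (derivCoeff coeffF) atTop (𝓝 π⁻¹) :=
  (tendsto_natCast_mul_coeffF.comp (tendsto_add_atTop_nat 1)).congr fun n => by
    simp [derivCoeff]

lemma hasDerivAt_F {x : ℝ} (hx : |x| < 1) : HasDerivAt F (derivF x) x := by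
  rw [F_eq_powerSum]
  exact hasDerivAt_powerSum abs_coeffF_le_one hx

lemma F_zero : F 0 = 1 := by
  rw [F_eq_powerSum, powerSum_zero, coeffF_zero]

lemma one_le_F {x : ℝ} (h0 : 0 ≤ x) (h1 : x < 1) : 1 ≤ F x := by
  rw [F_eq_powerSum, ← coeffF_zero, powerSum]
  have hsum := summable_mul_pow_of_abs_le abs_coeffF_le_one (abs_lt.2 ⟨by linarith, h1⟩)
  simpa using hsum.le_tsum 0 fun n _ => mul_nonneg (sq_nonneg _) (pow_nonneg h0 n)

lemma continuousAt_derivF_zero : ContinuousAt derivF 0 := by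
  obtain ⟨C, hC⟩ := exists_abs_le_of_tendsto tendsto_derivCoeff_coeffF
  exact (hasDerivAt_powerSum hC (by simp)).continuousAt

lemma mul_derivF {x : ℝ} (hx : |x| < 1) : x * derivF x = powerSum (fun n => n * coeffF n) x := by
  obtain ⟨C, hC⟩ := exists_abs_le_of_tendsto tendsto_natCast_mul_coeffF
  exact (powerSum_natCast_mul (summable_mul_pow_of_abs_le hC hx)).symm

lemma derivCoeff_natCast_mul_coeffF (n : ℕ) :
    derivCoeff (fun n => n * coeffF n) n = n * (n * coeffF n) + n * coeffF n + coeffF n / 4 := by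
  rw [derivCoeff]
  push_cast
  linear_combination coeffF_succ n

lemma hasDerivAt_mul_one_sub_mul_derivF {x : ℝ} (hx : |x| < 1) :
    HasDerivAt (fun t => t * (1 - t) * derivF t) (F x / 4) x := by
  set θ : ℕ → ℝ := fun n => n * coeffF n
  obtain ⟨C, hC⟩ := exists_abs_le_of_tendsto tendsto_natCast_mul_coeffF
  have hQ : HasDerivAt (fun t => (1 - t) * powerSum θ t)
      (-1 * powerSum θ x + (1 - x) * powerSum (derivCoeff θ) x) x :=
    ((hasDerivAt_id x).const_sub 1).mul (hasDerivAt_powerSum hC hx)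
  have hθθ : ∀ n : ℕ, |n * θ n| ≤ C * (n + 1) := fun n => by
    rw [abs_mul, Nat.abs_cast]
    nlinarith [hC n, abs_nonneg (θ n), (n.cast_nonneg : (0 : ℝ) ≤ n)]
  have hsum := summable_mul_pow_of_abs_le_linear hθθ hx
  have hshift : powerSum (fun n => n * θ n) x = x * powerSum (derivCoeff θ) x :=
    powerSum_natCast_mul hsum
  have hcoeff : powerSum (derivCoeff θ) x
      = powerSum (fun n => n * θ n) x + powerSum θ x + F x / 4 := by
    rw [F_eq_powerSum, powerSum, powerSum, powerSum, powerSum, ← tsum_div_const,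
      ← hsum.tsum_add (summable_mul_pow_of_abs_le hC hx),
      ← (hsum.add (summable_mul_pow_of_abs_le hC hx)).tsum_add
        ((summable_mul_pow_of_abs_le abs_coeffF_le_one hx).div_const 4)]
    exact tsum_congr fun n => by rw [derivCoeff_natCast_mul_coeffF]; ring
  refine (hQ.congr_of_eventuallyEq ?_).congr_deriv (by linear_combination hcoeff + hshift)
  filter_upwards [(continuous_abs.tendsto x).eventually (eventually_lt_nhds hx)] with t ht
  rw [← mul_derivF ht]
  ring

def wronskianF (t : ℝ) : ℝ := t * (1 - t) * (derivF t * F (1 - t) + derivF (1 - t) * F t)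

lemma hasDerivAt_wronskianF {t : ℝ} (h0 : 0 < t) (h1 : t < 1) : HasDerivAt wronskianF 0 t := by
  have ht : |t| < 1 := abs_lt.2 ⟨by linarith, h1⟩
  have ht' : |1 - t| < 1 := abs_lt.2 ⟨by linarith, by linarith⟩
  have hQ := hasDerivAt_mul_one_sub_mul_derivF ht
  have hQ' := (hasDerivAt_mul_one_sub_mul_derivF ht').comp_const_sub 1 t
  have hF' := (hasDerivAt_F ht').comp_const_sub 1 t
  have hW : wronskianF = fun s => s * (1 - s) * derivF s * F (1 - s)
      + (1 - s) * (1 - (1 - s)) * derivF (1 - s) * F s := by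
    funext s; rw [wronskianF]; ring
  rw [hW]
  refine ((hQ.mul hF').add (hQ'.mul (hasDerivAt_F ht))).congr_deriv ?_
  ring

lemma tendsto_wronskianF : Tendsto wronskianF (𝓝[<] 1) (𝓝 π⁻¹) := by
  have hsub : Tendsto (fun s : ℝ => 1 - s) (𝓝[<] 1) (𝓝 0) :=
    ((continuous_const.sub continuous_id).tendsto' 1 0 (sub_self 1)).mono_left nhdsWithin_le_nhds
  have hid : Tendsto (fun s : ℝ => s) (𝓝[<] 1) (𝓝 1) := tendsto_id.mono_left nhdsWithin_le_nhds
  have hF : Tendsto (fun s => F (1 - s)) (𝓝[<] 1) (𝓝 1) := by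
    simpa only [F_zero, Function.comp_def] using
      (hasDerivAt_F (by simp)).continuousAt.tendsto.comp hsub
  have hF' : Tendsto (fun s => derivF (1 - s)) (𝓝[<] 1) (𝓝 (derivF 0)) :=
    continuousAt_derivF_zero.tendsto.comp hsub
  have hAbelF := tendsto_one_sub_mul_powerSum tendsto_coeffF
  have hAbelF' := tendsto_one_sub_mul_powerSum tendsto_derivCoeff_coeffF
  rw [← F_eq_powerSum] at hAbelF
  have h := ((hid.mul hAbelF').mul hF).add ((hid.mul hF').mul hAbelF)
  rw [one_mul, mul_one, mul_zero, add_zero] at h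
  refine h.congr fun s => ?_
  rw [wronskianF, derivF]
  ring

lemma wronskianF_eq {t : ℝ} (h0 : 0 < t) (h1 : t < 1) : wronskianF t = π⁻¹ := by
  have hconst : EqOn wronskianF (fun _ => wronskianF t) (Ioo 0 1) := fun s hs =>
    isOpen_Ioo.is_const_of_deriv_eq_zero isPreconnected_Ioo
      (fun s hs => (hasDerivAt_wronskianF hs.1 hs.2).differentiableAt.differentiableWithinAt)
      (fun s hs => (hasDerivAt_wronskianF hs.1 hs.2).deriv) hs ⟨h0, h1⟩
  refine tendsto_nhds_unique (tendsto_const_nhds.congr' ?_) tendsto_wronskianF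
  filter_upwards [Ioo_mem_nhdsLT one_pos] with s hs using (hconst hs).symm

end

/-- **Derivative of the period ratio.** With `u(α) = F(1-α)/(2F(α))`, for `0 < α < 1`,
`du/dα = -1/(2πα(1-α)F(α)²)`. -/
theorem deriv_period_ratio (α : ℝ) (hα0 : 0 < α) (hα1 : α < 1) :
    HasDerivAt (fun t : ℝ => F (1 - t) / (2 * F t))
      (-1 / (2 * π * α * (1 - α) * (F α) ^ 2)) α := by
  have hα : |α| < 1 := abs_lt.2 ⟨by linarith, hα1⟩
  have hF : 0 < F α := one_pos.trans_le (one_le_F hα0.le hα1)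
  have hF₁ := (hasDerivAt_F (abs_lt.2 ⟨by linarith, by linarith⟩ : |1 - α| < 1)).comp_const_sub 1 α
  have hW := wronskianF_eq hα0 hα1
  refine (hF₁.div ((hasDerivAt_F hα).const_mul 2) (by positivity)).congr_deriv ?_
  rw [wronskianF, ← mul_eq_one_iff_eq_inv₀ Real.pi_ne_zero] at hW
  have hα1' : 1 - α ≠ 0 := by linarith
  field_simp
  linear_combination -hW
end
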